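/- Let f(z) = z + a₂z² + a₃z³ + a₄z⁴ + ⋯ belong to Ω. Then |T₃(2)| = |(a₂ - a₄)(a₂² - 2a₃² + a₂a₄)| ≤ 329/549. -/

import Mathlib

/-!
With `f = z + Σ aₙ zⁿ`, the function `g(z) = z f'(z) - f(z) = Σ (n - 1) aₙ zⁿ` is bounded by `1/2`
on the unit disc, so Cauchy's estimate gives `(n - 1) |aₙ| ≤ 1/2`: `|a₂| ≤ 1/2`, `|a₃| ≤ 1/4`,
`|a₄| ≤ 1/6`. The triangle inequality then bounds `|T₃(2)|` by `11/36 < 329/549`.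
-/

open Metric Filter Set Topology Nat

section IdMulDerivSub

variable {𝕜 : Type*} [NontriviallyNormedField 𝕜] [CompleteSpace 𝕜] {f : 𝕜 → 𝕜} {z : 𝕜}

theorem AnalyticAt.hasDerivAt_iteratedDeriv (hf : AnalyticAt 𝕜 f z) (n : ℕ) :
    HasDerivAt (iteratedDeriv n f) (iteratedDeriv (n + 1) f z) z := by
  have hn : AnalyticAt 𝕜 (iteratedDeriv n f) z :=
    iteratedDeriv_eq_iterate (f := f) ▸ hf.iterated_deriv n
  rw [iteratedDeriv_succ]
  exact hn.differentiableAt.hasDerivAt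

theorem AnalyticAt.iteratedDeriv_succ_id_mul_deriv_sub (k : ℕ) (hf : AnalyticAt 𝕜 f z) :
    iteratedDeriv (k + 1) (fun w => w * deriv f w - f w) z =
      k * iteratedDeriv (k + 1) f z + z * iteratedDeriv (k + 2) f z := by
  induction k generalizing z with
  | zero =>
    have hd₁ := hf.hasDerivAt_iteratedDeriv 1
    rw [iteratedDeriv_one] at hd₁
    have h : HasDerivAt (fun w => w * deriv f w - f w)
        (1 * deriv f z + z * iteratedDeriv 2 f z - deriv f z) z :=
      ((hasDerivAt_id' z).mul hd₁).sub hf.differentiableAt.hasDerivAt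
    rw [iteratedDeriv_one, h.deriv]
    simp
  | succ k ih =>
    have hev : iteratedDeriv (k + 1) (fun w => w * deriv f w - f w) =ᶠ[𝓝 z]
        fun w => k * iteratedDeriv (k + 1) f w + w * iteratedDeriv (k + 2) f w :=
      (isOpen_analyticAt 𝕜 f).eventually_mem hf |>.mono fun w hw => ih hw
    have h : HasDerivAt (fun w => k * iteratedDeriv (k + 1) f w + w * iteratedDeriv (k + 2) f w)
        (k * iteratedDeriv (k + 2) f z + (1 * iteratedDeriv (k + 2) f z +
          z * iteratedDeriv (k + 3) f z)) z :=
      ((hf.hasDerivAt_iteratedDeriv (k + 1)).const_mul (k : 𝕜)).add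
        ((hasDerivAt_id' z).mul (hf.hasDerivAt_iteratedDeriv (k + 2)))
    rw [iteratedDeriv_succ, hev.deriv_eq, h.deriv]
    push_cast
    ring

end IdMulDerivSub

theorem Complex.norm_iteratedDeriv_le_of_forall_mem_ball_norm_le {F : Type*}
    [NormedAddCommGroup F] [NormedSpace ℂ F] [CompleteSpace F] {c : ℂ} {R M : ℝ} {g : ℂ → F}
    (n : ℕ) (hR : 0 < R) (hg : DifferentiableOn ℂ g (ball c R))
    (hM : ∀ z ∈ ball c R, ‖g z‖ ≤ M) :
    ‖iteratedDeriv n g c‖ ≤ n ! * M / R ^ n := by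
  have hr : ∀ r ∈ Ioo 0 R, ‖iteratedDeriv n g c‖ ≤ n ! * M / r ^ n := fun r hr =>
    norm_iteratedDeriv_le_of_forall_mem_sphere_norm_le n hr.1
      (hg.diffContOnCl_ball (closedBall_subset_ball hr.2))
      fun z hz => hM z (closedBall_subset_ball hr.2 (sphere_subset_closedBall hz))
  have hlim : Tendsto (fun r : ℝ => n ! * M / r ^ n) (𝓝[<] R) (𝓝 (n ! * M / R ^ n)) :=
    (continuousAt_const.div (continuousAt_id.pow n) (pow_ne_zero n hR.ne')).tendsto.mono_left
      nhdsWithin_le_nhds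
  exact ge_of_tendsto hlim (eventually_of_mem (Ioo_mem_nhdsLT hR) hr)

theorem natCast_mul_norm_iteratedDeriv_div_factorial_le {f : ℂ → ℂ} {M : ℝ}
    (hf : AnalyticOnNhd ℂ f (ball 0 1)) (hM : ∀ z ∈ ball (0 : ℂ) 1, ‖z * deriv f z - f z‖ ≤ M)
    (k : ℕ) : k * ‖iteratedDeriv (k + 1) f 0 / (k + 1)!‖ ≤ M := by
  have hg : DifferentiableOn ℂ (fun z => z * deriv f z - f z) (ball 0 1) :=
    ((analyticOnNhd_id.mul hf.deriv).sub hf).differentiableOn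
  have h := Complex.norm_iteratedDeriv_le_of_forall_mem_ball_norm_le (k + 1) one_pos hg hM
  rw [(hf 0 (mem_ball_self one_pos)).iteratedDeriv_succ_id_mul_deriv_sub] at h
  have hfac : (0 : ℝ) < (k + 1)! := by positivity
  rw [norm_div, Complex.norm_natCast, ← mul_div_assoc, div_le_iff₀ hfac]
  simpa [mul_comm M] using h

theorem norm_sub_mul_sq_sub_two_mul_sq_add_mul_le {a b c : ℂ} (ha : ‖a‖ ≤ 1 / 2)
    (hb : ‖b‖ ≤ 1 / 4) (hc : ‖c‖ ≤ 1 / 6) :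
    ‖(a - c) * (a ^ 2 - 2 * b ^ 2 + a * c)‖ ≤ 11 / 36 := by
  have h₁ : ‖a ^ 2 - 2 * b ^ 2 + a * c‖ ≤ ‖a‖ ^ 2 + 2 * ‖b‖ ^ 2 + ‖a‖ * ‖c‖ := by
    calc ‖a ^ 2 - 2 * b ^ 2 + a * c‖ ≤ ‖a ^ 2‖ + ‖2 * b ^ 2‖ + ‖a * c‖ :=
          (norm_add_le _ _).trans (by gcongr; exact norm_sub_le _ _)
      _ = ‖a‖ ^ 2 + 2 * ‖b‖ ^ 2 + ‖a‖ * ‖c‖ := by simp [norm_pow]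
  calc ‖(a - c) * (a ^ 2 - 2 * b ^ 2 + a * c)‖
      ≤ (‖a‖ + ‖c‖) * (‖a‖ ^ 2 + 2 * ‖b‖ ^ 2 + ‖a‖ * ‖c‖) := by
        rw [norm_mul]; gcongr; exact norm_sub_le _ _
    _ ≤ (1 / 2 + 1 / 6) * ((1 / 2) ^ 2 + 2 * (1 / 4) ^ 2 + 1 / 2 * (1 / 6)) := by gcongr
    _ = 11 / 36 := by norm_num

theorem stmt_18_general (f : ℂ → ℂ) (hf : AnalyticOnNhd ℂ f (ball 0 1))
    (hΩ : ∀ z ∈ ball (0 : ℂ) 1, ‖z * deriv f z - f z‖ < 1 / 2)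
    (a₂ a₃ a₄ : ℂ)
    (ha₂ : a₂ = iteratedDeriv 2 f 0 / 2)
    (ha₃ : a₃ = iteratedDeriv 3 f 0 / 6)
    (ha₄ : a₄ = iteratedDeriv 4 f 0 / 24) :
    ‖(a₂ - a₄) * (a₂ ^ 2 - 2 * a₃ ^ 2 + a₂ * a₄)‖ ≤ 329 / 549 := by
  have hcoeff := natCast_mul_norm_iteratedDeriv_div_factorial_le hf fun z hz => (hΩ z hz).le
  have h₂ : ‖a₂‖ ≤ 1 / 2 := by simpa [ha₂, Nat.factorial] using hcoeff 1
  have h₃ : ‖a₃‖ ≤ 1 / 4 := by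
    have := hcoeff 2; norm_num [ha₃, Nat.factorial] at this ⊢; linarith
  have h₄ : ‖a₄‖ ≤ 1 / 6 := by
    have := hcoeff 3; norm_num [ha₄, Nat.factorial] at this ⊢; linarith
  calc _ ≤ 11 / 36 := norm_sub_mul_sq_sub_two_mul_sq_add_mul_le h₂ h₃ h₄
    _ ≤ 329 / 549 := by norm_num

theorem stmt_18 (f : ℂ → ℂ) (hf : AnalyticOnNhd ℂ f (ball 0 1))
    (hf0 : f 0 = 0) (hf1 : deriv f 0 = 1)
    (hΩ : ∀ z ∈ ball (0 : ℂ) 1, ‖z * deriv f z - f z‖ < 1 / 2)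
    (a₂ a₃ a₄ : ℂ)
    (ha₂ : a₂ = iteratedDeriv 2 f 0 / 2)
    (ha₃ : a₃ = iteratedDeriv 3 f 0 / 6)
    (ha₄ : a₄ = iteratedDeriv 4 f 0 / 24) :
    ‖(a₂ - a₄) * (a₂ ^ 2 - 2 * a₃ ^ 2 + a₂ * a₄)‖ ≤ 329 / 549 :=
  stmt_18_general f hf hΩ a₂ a₃ a₄ ha₂ ha₃ ha₄
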